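/- arXiv:1902.04281 — 6 statements merged into one kernel-verified Lean document; each statement's English description precedes it below -/
import Mathlib

section
/- Let G be a finite group, F a field with char(F) ∤ |G|, and α ∈ Z²(G, F^*). The twisted group algebra F^α G has a commutative simple component in its Wedderburn decomposition if and only if the class [α] lies in the image of the inflation map from Ext(G/G', F^*) to H²(G, F^*). -/
/-- A witness that an `F`-algebra `A` has a commutative simple component in its
Wedderburn decomposition: a surjective `F`-algebra homomorphism onto a field. -/
structure CommComponentWitness (F A : Type) [Field F] [Ring A] [Algebra F A] where
  K : Type
  [fieldK : Field K]
  [algK : Algebra F K]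
  hom : A →ₐ[F] K
  surj : Function.Surjective hom

/-!
A map `t : G → Kˣ` into the units of a field with `t g * t h = α g h * t (g * h)` is the same as
an `F`-algebra map `F^α G → K`. Modulo `Fˣ`, such a `t` is a homomorphism into an abelian group, so
it factors through `G/G'`; its values on coset representatives of `G'` define a symmetric cocycle
`β` on `G/G'`, and comparing `t` with these values exhibits `α` as the inflation of `β` times a
coboundary. Conversely, a symmetric cocycle `β` defines an abelian extension of `G/G'` by `Fˣ`.
The units of an algebraic closure `F̄` form a divisible, hence injective, abelian group, so
`Fˣ → F̄ˣ` extends to this extension, which splits `β`, and therefore `α`, over `F̄ˣ`. The image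
of the resulting map `F^α G → F̄` is algebraic over `F`, hence a field.
-/

open Function

section Cocycle

variable {Q M N : Type*} [CommGroup M] [CommGroup N] {i : M →* N} {β : Q → Q → M} {T : Q → N}

theorem cocycle_of_mul_eq [Semigroup Q] (hi : Injective i)
    (hT : ∀ x y, T x * T y = i (β x y) * T (x * y)) (x y z : Q) :
    β x y * β (x * y) z = β x (y * z) * β y z := by
  refine hi (mul_right_cancel (b := T (x * y * z)) ?_)
  calc i (β x y * β (x * y) z) * T (x * y * z)
      = i (β x y) * (i (β (x * y) z) * T (x * y * z)) := by rw [map_mul, mul_assoc]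
    _ = T x * T y * T z := by rw [← hT, ← mul_assoc, ← hT]
    _ = T x * (i (β y z) * T (y * z)) := by rw [mul_assoc, hT]
    _ = i (β x (y * z) * β y z) * T (x * y * z) := by
        rw [mul_left_comm, hT, mul_left_comm, ← mul_assoc, ← map_mul, mul_assoc x]

theorem symm_of_mul_eq [CommMagma Q] (hi : Injective i)
    (hT : ∀ x y, T x * T y = i (β x y) * T (x * y)) (x y : Q) : β x y = β y x :=
  hi <| mul_right_cancel (b := T (x * y)) <| by rw [← hT, mul_comm, hT, mul_comm y]

theorem mul_eq_iff_eq_mul_coboundary {G : Type*} [Group G] [Monoid Q] (hi : Injective i)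
    (hT : ∀ x y, T x * T y = i (β x y) * T (x * y)) (p : G →* Q) (α : G → G → M)
    (μ : G → M) :
    (∀ g h, i (μ g) * T (p g) * (i (μ h) * T (p h))
        = i (α g h) * (i (μ (g * h)) * T (p (g * h)))) ↔
      ∀ g h, α g h = β (p g) (p h) * (μ g * μ h * (μ (g * h))⁻¹) := by
  refine forall₂_congr fun g h => ?_
  have hl : i (μ g) * T (p g) * (i (μ h) * T (p h))
      = i (μ g * μ h * β (p g) (p h)) * T (p (g * h)) :=
    calc _ = i (μ g) * i (μ h) * (T (p g) * T (p h)) := by ac_rfl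
      _ = _ := by rw [hT, p.map_mul, map_mul, map_mul]; simp only [mul_assoc]
  rw [hl, ← mul_assoc, ← map_mul, mul_left_inj, hi.eq_iff, ← mul_assoc, eq_mul_inv_iff_mul_eq,
    mul_comm (β _ _), eq_comm]

theorem exists_eq_mul_of_abelianization_of_eq {G : Type*} [Group G] {α : G → G → M}
    {t : G → N} (ht : ∀ g h, t g * t h = i (α g h) * t (g * h)) {g₁ g₂ : G}
    (hg : Abelianization.of g₁ = Abelianization.of g₂) : ∃ m, t g₁ = i m * t g₂ := by
  let π : G →* N ⧸ i.range := MonoidHom.mk' (fun g => (t g : N ⧸ i.range)) fun g h => by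
    rw [← QuotientGroup.mk_mul, ht, QuotientGroup.mk_mul,
      (QuotientGroup.eq_one_iff (i (α g h))).mpr (i.mem_range.mpr ⟨_, rfl⟩), one_mul]
  have hπ : π g₂ = π g₁ := by
    rw [← Abelianization.lift_apply_of π g₂, ← hg, Abelianization.lift_apply_of]
  obtain ⟨m, hm⟩ := QuotientGroup.eq.mp hπ
  exact ⟨m, by rw [hm, mul_comm, mul_inv_cancel_left]⟩

theorem exists_symm_cocycle_of_mul_eq {G : Type*} [Group G] (hi : Injective i)
    {α : G → G → M} {t : G → N} (ht : ∀ g h, t g * t h = i (α g h) * t (g * h)) :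
    ∃ β : Abelianization G → Abelianization G → M,
      (∀ x y z, β x y * β (x * y) z = β x (y * z) * β y z) ∧ (∀ x y, β x y = β y x) ∧
      ∃ μ : G → M, ∀ g h,
        α g h = β (Abelianization.of g) (Abelianization.of h) * (μ g * μ h * (μ (g * h))⁻¹) := by
  let s : Abelianization G → G := Quotient.out
  have hs : ∀ x, Abelianization.of (s x) = x := Quotient.out_eq'
  choose μ hμ using fun g =>
    exists_eq_mul_of_abelianization_of_eq ht (hs (Abelianization.of g)).symm
  set β : Abelianization G → Abelianization G → M := fun x y => α (s x) (s y) * μ (s x * s y)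
  have hβ : ∀ x y, t (s x) * t (s y) = i (β x y) * t (s (x * y)) := fun x y => by
    rw [ht, hμ (s x * s y), map_mul, hs, hs, map_mul, mul_assoc]
  refine ⟨β, cocycle_of_mul_eq hi hβ, symm_of_mul_eq hi hβ, μ,
    (mul_eq_iff_eq_mul_coboundary hi hβ Abelianization.of α μ).mp fun g h => ?_⟩
  rw [← hμ, ← hμ, ← hμ, ht]

end Cocycle

instance Additive.divisibleByInt {N : Type*} [CommGroup N] [RootableBy N ℤ] :
    DivisibleBy (Additive N) ℤ where
  div a n := .ofMul (RootableBy.root a.toMul n)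
  div_zero a := congrArg Additive.ofMul (RootableBy.root_zero a.toMul)
  div_cancel a hn := congrArg Additive.ofMul (RootableBy.root_cancel a.toMul hn)

theorem MonoidHom.exists_comp_eq_of_injective {A B N : Type*} [CommGroup A] [CommGroup B]
    [CommGroup N] [RootableBy N ℤ] {f : A →* B} (hf : Injective f) (g : A →* N) :
    ∃ h : B →* N, h.comp f = g := by
  obtain ⟨h, hh⟩ := (Module.Baer.of_divisible (Additive N)).extension_property_addMonoidHom
    f.toAdditive hf g.toAdditive
  exact ⟨MonoidHom.toAdditive.symm h, MonoidHom.ext fun a => DFunLike.congr_fun hh a⟩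

theorem IsAlgClosed.units_pow_surjective {K : Type*} [Field K] [IsAlgClosed K] {n : ℕ}
    (hn : n ≠ 0) : Surjective fun a : Kˣ => a ^ n := fun a => by
  obtain ⟨z, hz⟩ := IsAlgClosed.exists_pow_nat_eq (a : K) (Nat.pos_of_ne_zero hn)
  have hz0 : z ≠ 0 := by rintro rfl; exact a.ne_zero (by rw [← hz, zero_pow hn])
  exact ⟨Units.mk0 z hz0, Units.ext (by simpa using hz)⟩

noncomputable instance IsAlgClosed.unitsRootableByInt {K : Type*} [Field K] [IsAlgClosed K] :
    RootableBy Kˣ ℤ :=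
  letI := rootableByOfPowLeftSurj Kˣ ℕ IsAlgClosed.units_pow_surjective
  Group.rootableByIntOfRootableByNat Kˣ

theorem cocycle_one_left {Q M : Type*} [Monoid Q] [CommGroup M] {β : Q → Q → M}
    (hcoc : ∀ x y z, β x y * β (x * y) z = β x (y * z) * β y z) (x : Q) : β 1 x = β 1 1 := by
  simpa using (hcoc 1 1 x).symm

/-- `M × Q` with multiplication twisted by `β`; when `β` is a symmetric 2-cocycle this is the
abelian extension of `Q` by `M` classified by `β`. -/
@[ext]
structure TwistedProd {Q M : Type*} (β : Q → Q → M) where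
  fst : M
  snd : Q

namespace TwistedProd

variable {Q M : Type*} [CommGroup Q] [CommGroup M] {β : Q → Q → M}

instance : Mul (TwistedProd β) := ⟨fun p q => ⟨p.fst * q.fst * β p.snd q.snd, p.snd * q.snd⟩⟩

instance : One (TwistedProd β) := ⟨⟨(β 1 1)⁻¹, 1⟩⟩

instance : Inv (TwistedProd β) :=
  ⟨fun p => ⟨(p.fst * β p.snd p.snd⁻¹ * β 1 1)⁻¹, p.snd⁻¹⟩⟩

@[simp]
theorem mul_fst (p q : TwistedProd β) : (p * q).fst = p.fst * q.fst * β p.snd q.snd := rfl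

@[simp]
theorem mul_snd (p q : TwistedProd β) : (p * q).snd = p.snd * q.snd := rfl

@[simp]
theorem one_fst : (1 : TwistedProd β).fst = (β 1 1)⁻¹ := rfl

@[simp]
theorem one_snd : (1 : TwistedProd β).snd = 1 := rfl

@[simp]
theorem inv_fst (p : TwistedProd β) : p⁻¹.fst = (p.fst * β p.snd p.snd⁻¹ * β 1 1)⁻¹ := rfl

@[simp]
theorem inv_snd (p : TwistedProd β) : p⁻¹.snd = p.snd⁻¹ := rfl

abbrev commGroup (hcoc : ∀ x y z, β x y * β (x * y) z = β x (y * z) * β y z)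
    (hsym : ∀ x y, β x y = β y x) : CommGroup (TwistedProd β) where
  mul_assoc p q r := by
    refine TwistedProd.ext ?_ (mul_assoc _ _ _)
    calc _ = p.fst * q.fst * r.fst * (β p.snd q.snd * β (p.snd * q.snd) r.snd) := by
          simp only [mul_fst, mul_snd]; ac_rfl
      _ = _ := by simp only [mul_fst, mul_snd, hcoc]; ac_rfl
  one_mul p := TwistedProd.ext
    (by rw [mul_fst, one_snd, cocycle_one_left hcoc, one_fst, mul_comm _ p.fst,
      inv_mul_cancel_right])
    (one_mul _)
  mul_one p := TwistedProd.ext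
    (by rw [mul_fst, one_snd, hsym, cocycle_one_left hcoc, one_fst, inv_mul_cancel_right])
    (mul_one _)
  inv_mul_cancel p := TwistedProd.ext
    (by rw [mul_fst, inv_fst, inv_snd, hsym, mul_assoc, mul_inv_rev, inv_mul_cancel_right,
      one_fst])
    (inv_mul_cancel _)
  mul_comm p q := TwistedProd.ext (by rw [mul_fst, mul_fst, mul_comm p.fst, hsym]) (mul_comm _ _)

end TwistedProd

theorem exists_mul_eq_of_symm_cocycle {Q M N : Type*} [CommGroup Q] [CommGroup M] [CommGroup N]
    [RootableBy N ℤ] (i : M →* N) {β : Q → Q → M}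
    (hcoc : ∀ x y z, β x y * β (x * y) z = β x (y * z) * β y z)
    (hsym : ∀ x y, β x y = β y x) : ∃ T : Q → N, ∀ x y, T x * T y = i (β x y) * T (x * y) := by
  let _ := TwistedProd.commGroup hcoc hsym
  let ι : M →* TwistedProd β := MonoidHom.mk' (fun a => ⟨a * (β 1 1)⁻¹, 1⟩) fun a b =>
    TwistedProd.ext
      (show a * b * _ = a * _ * (b * _) * β 1 1 by
        rw [mul_assoc (a * _) (b * _), inv_mul_cancel_right, mul_right_comm a b])
      (one_mul 1).symm
  have hι : Injective ι := fun a b h => mul_right_cancel (congrArg TwistedProd.fst h)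
  obtain ⟨r, hr⟩ := MonoidHom.exists_comp_eq_of_injective hι i
  refine ⟨fun x => r ⟨1, x⟩, fun x y => ?_⟩
  have hsplit : (⟨1, x⟩ * ⟨1, y⟩ : TwistedProd β) = ι (β x y) * ⟨1, x * y⟩ :=
    TwistedProd.ext (by simp [ι, cocycle_one_left hcoc]) (one_mul _).symm
  rw [← map_mul, hsplit, map_mul, ← hr]
  rfl

theorem AlgHom.units_map_mul_eq {F A K G : Type*} [CommSemiring F] [Semiring A] [Algebra F A]
    [Semiring K] [Algebra F K] [Mul G] {u : G → Aˣ} {α : G → G → Fˣ}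
    (hmul : ∀ g h, (u g : A) * u h = (α g h : F) • (u (g * h) : A)) (φ : A →ₐ[F] K) (g h : G) :
    Units.map (φ : A →* K) (u g) * Units.map (φ : A →* K) (u h)
      = Units.map (algebraMap F K) (α g h) * Units.map (φ : A →* K) (u (g * h)) :=
  Units.ext <| by
    simp only [Units.val_mul, Units.coe_map, MonoidHom.coe_coe]
    rw [← map_mul, hmul, map_smul, Algebra.smul_def]

theorem Module.Basis.exists_algHom_of_mul_eq {F A K G : Type*} [CommRing F] [Ring A]
    [Algebra F A] [Semiring K] [Algebra F K] [Monoid G] {u : G → Aˣ} (b : Basis G F A)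
    (hb : ∀ g, b g = u g) {α : G → G → Fˣ}
    (hmul : ∀ g h, (u g : A) * u h = (α g h : F) • (u (g * h) : A)) {t : G → Kˣ}
    (ht : ∀ g h, t g * t h = Units.map (algebraMap F K) (α g h) * t (g * h)) :
    ∃ φ : A →ₐ[F] K, ∀ g, φ (u g) = t g := by
  let ψ : A →ₗ[F] K := b.constr F fun g => (t g : K)
  have hψ : ∀ g, ψ (u g) = t g := fun g => by rw [← hb, b.constr_basis]
  have hψ_mul : ∀ g h, ψ (u g * u h) = ψ (u g) * ψ (u h) := fun g h => by
    rw [hmul, map_smul, hψ, hψ, hψ, Algebra.smul_def]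
    simpa using congrArg Units.val (ht g h).symm
  have hu₁ : (u 1 : A) = (α 1 1 : F) • 1 := by
    refine (u 1).isUnit.mul_right_cancel ?_
    rw [hmul, mul_one, smul_mul_assoc, one_mul]
  have ht₁ : t 1 = Units.map (algebraMap F K) (α 1 1) :=
    mul_right_cancel (by rw [ht, mul_one])
  refine ⟨AlgHom.ofLinearMap ψ ?_ ((LinearMap.map_mul_iff ψ).mpr ?_), hψ⟩
  · refine (Units.map (algebraMap F K) (α 1 1)).isUnit.mul_left_cancel ?_
    simpa [← Algebra.smul_def, ← map_smul, ← hu₁, hψ] using congrArg Units.val ht₁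
  · exact b.ext fun g => b.ext fun h => by simpa [hb] using hψ_mul g h

theorem commutative_component_iff_inflation_of_symmetric_general
    {F A G : Type} [Field F] [Ring A] [Algebra F A] [Group G]
    (u : G → Aˣ) (b : Module.Basis G F A) (hb : ∀ g : G, b g = (u g : A))
    (α : G → G → Fˣ)
    (hmul : ∀ g h : G, (u g : A) * (u h : A) = (α g h : F) • (u (g * h) : A)) :
    Nonempty (CommComponentWitness F A) ↔
      ∃ β : Abelianization G → Abelianization G → Fˣ,
        (∀ x y z : Abelianization G, β x y * β (x * y) z = β x (y * z) * β y z) ∧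
        (∀ x y : Abelianization G, β x y = β y x) ∧
        ∃ μ : G → Fˣ, ∀ g h : G,
          α g h = β (Abelianization.of g) (Abelianization.of h) *
            (μ g * μ h * (μ (g * h))⁻¹) := by
  constructor
  · rintro ⟨K, φ, -⟩
    exact exists_symm_cocycle_of_mul_eq (Units.map_injective (algebraMap F K).injective)
      (AlgHom.units_map_mul_eq hmul φ)
  · rintro ⟨β, hcoc, hsym, μ, hα⟩
    obtain ⟨T, hT⟩ := exists_mul_eq_of_symm_cocycle (N := (AlgebraicClosure F)ˣ)
      (Units.map (algebraMap F (AlgebraicClosure F) : F →* _)) hcoc hsym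
    have ht := (mul_eq_iff_eq_mul_coboundary (Units.map_injective (algebraMap F _).injective) hT
      Abelianization.of α μ).mpr hα
    obtain ⟨φ, -⟩ := b.exists_algHom_of_mul_eq hb hmul ht
    let _ : Field φ.range := (Subalgebra.isField_of_algebraic φ.range).toField
    exact ⟨⟨φ.range, φ.rangeRestrict, φ.rangeRestrict_surjective⟩⟩

/-- Let `G` be a finite group, `F` a field with `char F ∤ |G|`, and `α ∈ Z²(G, F^*)`.
The twisted group algebra `F^α G` (an `F`-algebra `A` with basis `{u_g}` satisfying
`u_g u_h = α(g,h) u_{gh}`) has a commutative simple component in its Wedderburn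
decomposition if and only if `[α]` lies in the image of the inflation map from
`Ext(G/G', F^*)` (classes of symmetric cocycles on the abelianization) to `H²(G, F^*)`,
i.e. `α` is cohomologous to the inflation of a symmetric cocycle on `G/G'`. -/
theorem commutative_component_iff_inflation_of_symmetric
    {F A G : Type} [Field F] [Ring A] [Algebra F A] [Group G] [Fintype G]
    (hchar : (Fintype.card G : F) ≠ 0)
    (u : G → Aˣ) (b : Module.Basis G F A) (hb : ∀ g : G, b g = (u g : A))
    (α : G → G → Fˣ)
    (hcoc : ∀ g h k : G, α g h * α (g * h) k = α g (h * k) * α h k)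
    (hmul : ∀ g h : G, (u g : A) * (u h : A) = (α g h : F) • (u (g * h) : A)) :
    Nonempty (CommComponentWitness F A) ↔
      ∃ β : Abelianization G → Abelianization G → Fˣ,
        (∀ x y z : Abelianization G, β x y * β (x * y) z = β x (y * z) * β y z) ∧
        (∀ x y : Abelianization G, β x y = β y x) ∧
        ∃ μ : G → Fˣ, ∀ g h : G,
          α g h = β (Abelianization.of g) (Abelianization.of h) *
            (μ g * μ h * (μ (g * h))⁻¹) :=
  commutative_component_iff_inflation_of_symmetric_general u b hb α hmul
end

section
/- Let G be a finite group, F a field, α ∈ Z²(G, F^*), and let g ∈ G be an α-regular element, i.e. α(g,h) = α(h,g) for every h in the centralizer of g. If T is a transversal of the centralizer of g in G, then the element S_g = Σ_{t∈T} u_t u_g u_t^{-1} is central in the twisted group algebra F^α G. -/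
/-!
Write `v x = u_x u_g u_x⁻¹`. Since `u_x u_t` is a scalar multiple of `u_{xt}` and scalars are
central, `u_x v_t u_x⁻¹ = v_{xt}`. Regularity of `g` makes `u_c` commute with `u_g` for every
`c` in the centralizer `C` of `g`, so `v` is constant on the left cosets `xC`. Left
multiplication by `x` permutes these cosets, hence `u_x S_g u_x⁻¹ = Σ_{t ∈ T} v_{xt} = S_g`;
as the `u_x` span the algebra, `S_g` is central.
-/

namespace Subgroup.IsComplement

variable {G M : Type*} [Group G] [AddCommMonoid M] {H : Subgroup G} {T : Finset G}

theorem sum_comp_smul (hT : IsComplement (T : Set G) H) (f : G ⧸ H → M) (x : G) :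
    ∑ t ∈ T, f (x • (t : G ⧸ H)) = ∑ t ∈ T, f t := by
  have : Fintype (G ⧸ H) := Fintype.ofEquiv _ hT.leftQuotientEquiv.symm
  have sum_eq_sum_quotient : ∀ φ : G ⧸ H → M, ∑ t ∈ T, φ t = ∑ q, φ q := fun φ => by
    rw [← Finset.sum_coe_sort, ← Equiv.sum_comp hT.leftQuotientEquiv.symm]
    -- `hT.leftQuotientEquiv.symm s` is the coset of `s` by definition
    rfl
  rw [sum_eq_sum_quotient (fun q => f (x • q)), sum_eq_sum_quotient f]
  exact Equiv.sum_comp (MulAction.toPerm x) f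

theorem sum_comp_mul_left (hT : IsComplement (T : Set G) H) {f : G → M}
    (hf : ∀ x, ∀ c ∈ H, f (x * c) = f x) (x : G) :
    ∑ t ∈ T, f (x * t) = ∑ t ∈ T, f t :=
  hT.sum_comp_smul (Quotient.lift (s := QuotientGroup.leftRel H) f fun a b hab => by
    simpa using (hf a _ (QuotientGroup.leftRel_apply.1 hab)).symm) x

end Subgroup.IsComplement

theorem Module.Basis.mem_center_of_commute {ι R A : Type*} [CommSemiring R] [Ring A]
    [Algebra R A] (b : Module.Basis ι R A) {s : A} (h : ∀ i, Commute (b i) s) :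
    s ∈ Subring.center A := by
  rw [Subring.mem_center_iff]
  intro a
  exact LinearMap.congr_fun
    (b.ext (f₁ := LinearMap.mulRight R s) (f₂ := LinearMap.mulLeft R s) h) a

theorem Units.mul_conj_eq_conj_mul_of_mul_eq_smul {R A : Type*} [CommSemiring R] [Semiring A]
    [Algebra R A] {a b d : Aˣ} {c : R} (h : (a : A) * b = c • (d : A)) (z : A) :
    (a : A) * (b * z * ↑b⁻¹) = d * z * ↑d⁻¹ * a := by
  refine b.isUnit.mul_right_cancel ?_
  calc (a : A) * (b * z * ↑b⁻¹) * b = a * b * z := by simp [mul_assoc]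
    _ = c • ((d : A) * z) := by rw [h, smul_mul_assoc]
    _ = d * z * ↑d⁻¹ * (a * b) := by simp [h, mul_assoc]
    _ = d * z * ↑d⁻¹ * a * b := by rw [mul_assoc _ (a : A)]

section TwistedGroupAlgebra

variable {F A G : Type*} [CommSemiring F] [Semiring A] [Algebra F A] [Group G]
  {u : G → Aˣ} {α : G → G → Fˣ}

theorem twisted_mul_conj
    (hmul : ∀ x y : G, (u x : A) * (u y : A) = (α x y : F) • (u (x * y) : A))
    (x t : G) (z : A) :
    (u x : A) * (u t * z * ↑(u t)⁻¹) = u (x * t) * z * ↑(u (x * t))⁻¹ * u x :=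
  Units.mul_conj_eq_conj_mul_of_mul_eq_smul (hmul x t) z

theorem twisted_conj_mul_right_of_commute
    (hmul : ∀ x y : G, (u x : A) * (u y : A) = (α x y : F) • (u (x * y) : A)) {c : G} {z : A}
    (hcz : Commute (u c : A) z) (x : G) :
    (u (x * c) : A) * z * ↑(u (x * c))⁻¹ = u x * z * ↑(u x)⁻¹ := by
  have hfix : (u c : A) * z * ↑(u c)⁻¹ = z := by rw [hcz.eq, Units.mul_inv_cancel_right]
  have h := twisted_mul_conj hmul x c z
  rw [hfix] at h
  exact (Units.eq_mul_inv_iff_mul_eq _).2 h.symm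

theorem twisted_commute_of_regular
    (hmul : ∀ x y : G, (u x : A) * (u y : A) = (α x y : F) • (u (x * y) : A)) {g c : G}
    (hgc : g * c = c * g) (hα : α g c = α c g) : Commute (u c : A) (u g) := by
  rw [Commute, SemiconjBy, hmul, hmul, hgc, hα]

end TwistedGroupAlgebra

theorem twisted_class_sum_central_general
    {F A G : Type} [Field F] [Ring A] [Algebra F A] [Group G]
    (u : G → Aˣ) (b : Module.Basis G F A) (hb : ∀ x : G, b x = (u x : A))
    (α : G → G → Fˣ)
    (hmul : ∀ x y : G, (u x : A) * (u y : A) = (α x y : F) • (u (x * y) : A))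
    (g : G) (hreg : ∀ h : G, g * h = h * g → α g h = α h g)
    (T : Finset G)
    (hT : ∀ x : G, ∃! t : G, t ∈ T ∧ t⁻¹ * x ∈ Subgroup.centralizer ({g} : Set G)) :
    (∑ t ∈ T, (u t : A) * (u g : A) * (((u t)⁻¹ : Aˣ) : A)) ∈ Subring.center A := by
  have hTC : Subgroup.IsComplement (T : Set G) (Subgroup.centralizer ({g} : Set G)) :=
    Subgroup.isComplement_iff_existsUnique_inv_mul_mem.2 fun x => by
      obtain ⟨t, ⟨htT, htx⟩, huniq⟩ := hT x
      exact ⟨⟨t, htT⟩, htx, fun s hs => Subtype.ext (huniq s ⟨s.2, hs⟩)⟩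
  have conj_mul_mem : ∀ x, ∀ c ∈ Subgroup.centralizer ({g} : Set G),
      (u (x * c) : A) * u g * ↑(u (x * c))⁻¹ = u x * u g * ↑(u x)⁻¹ := fun x c hc => by
    have hgc : g * c = c * g := Subgroup.mem_centralizer_iff.1 hc g rfl
    exact twisted_conj_mul_right_of_commute hmul
      (twisted_commute_of_regular hmul hgc (hreg c hgc)) x
  refine b.mem_center_of_commute fun x => ?_
  rw [hb x, Commute, SemiconjBy, Finset.mul_sum]
  calc ∑ t ∈ T, (u x : A) * (u t * u g * ↑(u t)⁻¹)
      = ∑ t ∈ T, (u (x * t) : A) * u g * ↑(u (x * t))⁻¹ * u x :=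
        Finset.sum_congr rfl fun t _ => twisted_mul_conj hmul x t (u g)
    _ = (∑ t ∈ T, (u t : A) * u g * ↑(u t)⁻¹) * u x := by
        rw [← Finset.sum_mul,
          hTC.sum_comp_mul_left (f := fun y => (u y : A) * u g * ↑(u y)⁻¹) conj_mul_mem x]

/-- Let `F^α G` be a twisted group algebra (an `F`-algebra `A` with basis of units
`{u_g}` satisfying `u_g u_h = α(g,h) u_{gh}`), let `g ∈ G` be an `α`-regular element
(i.e. `α(g,h) = α(h,g)` for all `h` commuting with `g`), and let `T` be a transversal
of the centralizer of `g` in `G`. Then `S_g = Σ_{t ∈ T} u_t u_g u_t⁻¹` is central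
in `F^α G`. -/
theorem twisted_class_sum_central
    {F A G : Type} [Field F] [Ring A] [Algebra F A] [Group G] [Fintype G]
    (u : G → Aˣ) (b : Module.Basis G F A) (hb : ∀ x : G, b x = (u x : A))
    (α : G → G → Fˣ)
    (hcoc : ∀ x y z : G, α x y * α (x * y) z = α x (y * z) * α y z)
    (hmul : ∀ x y : G, (u x : A) * (u y : A) = (α x y : F) • (u (x * y) : A))
    (g : G) (hreg : ∀ h : G, g * h = h * g → α g h = α h g)
    (T : Finset G)
    (hT : ∀ x : G, ∃! t : G, t ∈ T ∧ t⁻¹ * x ∈ Subgroup.centralizer ({g} : Set G)) :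
    (∑ t ∈ T, (u t : A) * (u g : A) * (((u t)⁻¹ : Aˣ) : A)) ∈ Subring.center A :=
  twisted_class_sum_central_general u b hb α hmul g hreg T hT
end

section
/- Let g and h be commuting elements of a finite group G with orders n and m respectively, let F be a field, and let α ∈ Z²(G, F^*). Then the commutator [u_g, u_h] = u_g u_h u_g^{-1} u_h^{-1} in the twisted group algebra F^α G is a scalar λ ∈ F^* which is a root of unity whose order divides gcd(m, n). -/
/-!
Since `g` and `h` commute, the defining relation `u_x u_y = α(x,y) u_{xy}` gives
`u_g u_h = λ u_h u_g` with `λ = α(g,h) / α(h,g)`, and then `u_g u_h^k = λ^k u_h^k u_g` for all `k`.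
For `k = ord(h)` the power `u_h^k` is a scalar multiple of `u_1`, itself a scalar, so it commutes
with `u_g`; as `u_h^k u_g` is a unit this forces `λ^{ord(h)} = 1`. Symmetrically `λ^{ord(g)} = 1`.
-/

section SkewCommute

variable {R A : Type*} [CommSemiring R] [Semiring A] [Algebra R A]

theorem mul_pow_eq_smul_pow_mul {a c : A} {μ : R} (hμ : a * c = μ • (c * a)) (k : ℕ) :
    a * c ^ k = μ ^ k • (c ^ k * a) := by
  induction k with
  | zero => simp
  | succ k ih =>
    rw [pow_succ, ← mul_assoc, ih, smul_mul_assoc, mul_assoc, hμ, mul_smul_comm, smul_smul,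
      ← mul_assoc, ← pow_succ, ← pow_succ]

theorem Units.mul_mul_inv_mul_inv_eq_algebraMap {a c : Aˣ} {μ : R}
    (hμ : (a : A) * c = μ • ((c : A) * a)) :
    (a : A) * c * ((a⁻¹ : Aˣ) : A) * ((c⁻¹ : Aˣ) : A) = algebraMap R A μ := by
  rw [hμ, smul_mul_assoc, smul_mul_assoc, mul_assoc (c : A), Units.mul_inv, mul_one,
    Units.mul_inv, Algebra.algebraMap_eq_smul_one]

end SkewCommute

section UnitSmul

variable {F A : Type*} [Field F] [Semiring A] [Algebra F A] [Nontrivial A]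

theorem Units.eq_one_of_smul_eq_self {x : Aˣ} {μ : F} (hx : μ • (x : A) = x) : μ = 1 := by
  have hμ : algebraMap F A μ = algebraMap F A 1 := by
    rw [map_one, Algebra.algebraMap_eq_smul_one, ← x.mul_inv, ← smul_mul_assoc, hx]
  exact (algebraMap F A).injective hμ

theorem pow_eq_one_of_skew_commute {a c : Aˣ} {μ : F} (hμ : (a : A) * c = μ • ((c : A) * a))
    {k : ℕ} (hk : Commute (a : A) ((c : A) ^ k)) : μ ^ k = 1 := by
  have hskew := mul_pow_eq_smul_pow_mul hμ k
  rw [hk.eq] at hskew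
  exact Units.eq_one_of_smul_eq_self (x := c ^ k * a) (by push_cast; exact hskew.symm)

end UnitSmul

section TwistedGroupAlgebra

variable {F A G : Type*} [Field F] [Semiring A] [Algebra F A] [Group G]
  {u : G → Aˣ} {α : G → G → Fˣ}

theorem twisted_mul_eq_smul_mul_of_commute
    (hmul : ∀ x y : G, (u x : A) * (u y : A) = (α x y : F) • (u (x * y) : A))
    {g h : G} (hgh : g * h = h * g) :
    (u g : A) * u h = ((α g h / α h g : Fˣ) : F) • ((u h : A) * u g) := by
  rw [hmul, hmul, hgh, smul_smul, Units.val_div_eq_div_val, div_mul_cancel₀ _ (α h g).ne_zero]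

theorem twisted_one_eq_algebraMap
    (hmul : ∀ x y : G, (u x : A) * (u y : A) = (α x y : F) • (u (x * y) : A)) :
    (u 1 : A) = algebraMap F A (α 1 1) := by
  calc (u 1 : A) = (u 1 : A) * u 1 * ((u 1)⁻¹ : Aˣ) := by rw [mul_assoc, Units.mul_inv, mul_one]
    _ = algebraMap F A (α 1 1) := by
      rw [hmul, one_mul, smul_mul_assoc, Units.mul_inv, Algebra.algebraMap_eq_smul_one]

theorem twisted_pow_eq_smul
    (hmul : ∀ x y : G, (u x : A) * (u y : A) = (α x y : F) • (u (x * y) : A)) (x : G) (k : ℕ) :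
    ∃ c : F, (u x : A) ^ k = c • (u (x ^ k) : A) := by
  induction k with
  | zero =>
    refine ⟨(α 1 1 : F)⁻¹, ?_⟩
    rw [pow_zero, pow_zero, twisted_one_eq_algebraMap hmul, Algebra.algebraMap_eq_smul_one,
      smul_smul, inv_mul_cancel₀ (α 1 1).ne_zero, one_smul]
  | succ k ih =>
    obtain ⟨c, hc⟩ := ih
    refine ⟨c * α (x ^ k) x, ?_⟩
    rw [pow_succ, hc, smul_mul_assoc, hmul, smul_smul, ← pow_succ]

theorem twisted_pow_orderOf_eq_algebraMap
    (hmul : ∀ x y : G, (u x : A) * (u y : A) = (α x y : F) • (u (x * y) : A)) (x : G) :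
    ∃ c : F, (u x : A) ^ orderOf x = algebraMap F A c := by
  obtain ⟨c, hc⟩ := twisted_pow_eq_smul hmul x (orderOf x)
  refine ⟨c * α 1 1, ?_⟩
  rw [hc, pow_orderOf_eq_one, twisted_one_eq_algebraMap hmul, Algebra.smul_def, map_mul]

theorem commute_twisted_pow_orderOf
    (hmul : ∀ x y : G, (u x : A) * (u y : A) = (α x y : F) • (u (x * y) : A)) (a : A) (x : G) :
    Commute a ((u x : A) ^ orderOf x) := by
  obtain ⟨c, hc⟩ := twisted_pow_orderOf_eq_algebraMap hmul x
  rw [hc]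
  exact (Algebra.commutes c a).symm

end TwistedGroupAlgebra

theorem twisted_commutator_root_of_unity_general
    {F A G : Type} [Field F] [Ring A] [Algebra F A] [Group G]
    (u : G → Aˣ)
    (α : G → G → Fˣ)
    (hmul : ∀ x y : G, (u x : A) * (u y : A) = (α x y : F) • (u (x * y) : A))
    (g h : G) (hgh : g * h = h * g) :
    ∃ lam : Fˣ,
      ((u g : A) * (u h : A) * (((u g)⁻¹ : Aˣ) : A) * (((u h)⁻¹ : Aˣ) : A)
          = algebraMap F A (lam : F)) ∧
        lam ^ Nat.gcd (orderOf h) (orderOf g) = 1 := by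
  rcases subsingleton_or_nontrivial A with hA | hA
  · exact ⟨1, Subsingleton.elim _ _, one_pow _⟩
  have hgh' := twisted_mul_eq_smul_mul_of_commute hmul hgh
  have hhg' := twisted_mul_eq_smul_mul_of_commute hmul hgh.symm
  refine ⟨α g h / α h g, Units.mul_mul_inv_mul_inv_eq_algebraMap hgh', ?_⟩
  have hord_h : (α g h / α h g) ^ orderOf h = 1 := Units.ext <| by
    rw [Units.val_pow_eq_pow_val, Units.val_one]
    exact pow_eq_one_of_skew_commute hgh' (commute_twisted_pow_orderOf hmul _ h)
  have hord_g : (α g h / α h g)⁻¹ ^ orderOf g = 1 := Units.ext <| by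
    rw [inv_div, Units.val_pow_eq_pow_val, Units.val_one]
    exact pow_eq_one_of_skew_commute hhg' (commute_twisted_pow_orderOf hmul _ g)
  rw [inv_pow, inv_eq_one] at hord_g
  exact pow_gcd_eq_one.mpr ⟨hord_h, hord_g⟩

/-- Let `g, h` be commuting elements of a finite group `G` of orders `n` and `m`, and
let `F^α G` be a twisted group algebra over a field `F` (an `F`-algebra `A` with basis
of units `{u_x}` satisfying `u_x u_y = α(x,y) u_{xy}`). Then the commutator
`u_g u_h u_g⁻¹ u_h⁻¹` is a scalar `λ ∈ F^*` which is a root of unity of order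
dividing `gcd(m, n)`, i.e. `λ^gcd(m,n) = 1`. -/
theorem twisted_commutator_root_of_unity
    {F A G : Type} [Field F] [Ring A] [Algebra F A] [Group G] [Fintype G]
    (u : G → Aˣ) (b : Module.Basis G F A) (hb : ∀ x : G, b x = (u x : A))
    (α : G → G → Fˣ)
    (hcoc : ∀ x y z : G, α x y * α (x * y) z = α x (y * z) * α y z)
    (hmul : ∀ x y : G, (u x : A) * (u y : A) = (α x y : F) • (u (x * y) : A))
    (g h : G) (hgh : g * h = h * g) :
    ∃ lam : Fˣ,
      ((u g : A) * (u h : A) * (((u g)⁻¹ : Aˣ) : A) * (((u h)⁻¹ : Aˣ) : A)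
          = algebraMap F A (lam : F)) ∧
        lam ^ Nat.gcd (orderOf h) (orderOf g) = 1 :=
  twisted_commutator_root_of_unity_general u α hmul g h hgh
end

section
/- Let F be a field and t(F^*) the torsion subgroup of F^*. For any positive integer n, the quotient t(F^*)/t(F^*)^n is a finite cyclic group. -/
/-!
Any two roots of unity of `F` generate a finite, hence cyclic, subgroup of `Fˣ`, so any two
elements of `t(F^*)` and of its quotient `Q = t(F^*)/t(F^*)^n` lie in a common cyclic subgroup.
Since `Q` has exponent dividing `n`, it has an element `g` of maximal order `exp Q`. For any `b`,
some cyclic `⟨c⟩` contains `g` and `b`; the order of `c` divides `exp Q = ord g`, so `⟨g⟩ = ⟨c⟩`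
and `b ∈ ⟨g⟩`. Thus `Q = ⟨g⟩` is cyclic of finite order.
-/

open Subgroup

/-- For two elements this is equivalent to the usual definition (every finitely generated
subgroup is cyclic). -/
def IsLocallyCyclic (G : Type*) [Group G] : Prop :=
  ∀ a b : G, ∃ c : G, a ∈ zpowers c ∧ b ∈ zpowers c

namespace IsLocallyCyclic

section Group

variable {G : Type*} [Group G]

theorem of_surjective {H : Type*} [Group H] (f : G →* H) (hf : Function.Surjective f)
    (hG : IsLocallyCyclic G) : IsLocallyCyclic H := by
  intro a b
  obtain ⟨x, rfl⟩ := hf a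
  obtain ⟨y, rfl⟩ := hf b
  obtain ⟨c, hx, hy⟩ := hG x y
  refine ⟨f c, ?_, ?_⟩ <;> rw [← MonoidHom.map_zpowers] <;> exact mem_map_of_mem f ‹_›

theorem of_subgroup {K : Subgroup G}
    (h : ∀ a ∈ K, ∀ b ∈ K, ∃ c ∈ K, a ∈ zpowers c ∧ b ∈ zpowers c) : IsLocallyCyclic K := by
  intro a b
  obtain ⟨c, hc, ha, hb⟩ := h a a.2 b b.2
  refine ⟨⟨c, hc⟩, ?_, ?_⟩ <;>
    rw [← mem_map_iff_mem K.subtype_injective, MonoidHom.map_zpowers] <;> assumption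

end Group

section CommGroup

variable {G : Type*} [CommGroup G]

theorem isCyclic (hG : IsLocallyCyclic G) (hexp : Monoid.ExponentExists G) : IsCyclic G := by
  obtain ⟨g, hg⟩ := Monoid.exists_orderOf_eq_exponent hexp
  refine ⟨g, fun b => show b ∈ zpowers g from ?_⟩
  obtain ⟨c, hgc, hbc⟩ := hG g b
  have : Finite (zpowers c) := (hexp.isOfFinOrder (g := c)).finite_zpowers
  have hcard : Nat.card (zpowers c) ≤ Nat.card (zpowers g) := by
    rw [Nat.card_zpowers, Nat.card_zpowers, hg]
    exact Nat.le_of_dvd hexp.exponent_ne_zero.bot_lt (Monoid.order_dvd_exponent c)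
  rwa [eq_of_le_of_card_ge (zpowers_le.mpr hgc) hcard]

theorem finite (hG : IsLocallyCyclic G) (hexp : Monoid.ExponentExists G) : Finite G := by
  have := hG.isCyclic hexp
  by_contra hinf
  have := not_finite_iff_infinite.mp hinf
  exact hexp.exponent_ne_zero IsCyclic.exponent_eq_zero_of_infinite

end CommGroup

end IsLocallyCyclic

theorem exists_isOfFinOrder_mem_zpowers_and_mem_zpowers {R : Type*} [CommRing R] [IsDomain R]
    {x y : Rˣ} (hx : IsOfFinOrder x) (hy : IsOfFinOrder y) :
    ∃ ζ : Rˣ, IsOfFinOrder ζ ∧ x ∈ zpowers ζ ∧ y ∈ zpowers ζ := by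
  set k := orderOf x * orderOf y
  have : NeZero k := ⟨(Nat.mul_pos hx.orderOf_pos hy.orderOf_pos).ne'⟩
  obtain ⟨ζ, hζ⟩ := ((rootsOfUnity k R).isCyclic_iff_exists_zpowers_eq_top).mp inferInstance
  have hxk : x ∈ rootsOfUnity k R := (mem_rootsOfUnity _ _).mpr <|
    orderOf_dvd_iff_pow_eq_one.mp (Dvd.intro _ rfl)
  have hyk : y ∈ rootsOfUnity k R := (mem_rootsOfUnity _ _).mpr <|
    orderOf_dvd_iff_pow_eq_one.mp (Dvd.intro_left _ rfl)
  have hζk : ζ ∈ rootsOfUnity k R := hζ ▸ mem_zpowers ζ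
  exact ⟨ζ, isOfFinOrder_iff_pow_eq_one.mpr ⟨k, NeZero.pos k, (mem_rootsOfUnity _ _).mp hζk⟩,
    hζ ▸ hxk, hζ ▸ hyk⟩

theorem isLocallyCyclic_torsion_units (R : Type*) [CommRing R] [IsDomain R] :
    IsLocallyCyclic (CommGroup.torsion Rˣ) :=
  IsLocallyCyclic.of_subgroup fun _ hx _ hy =>
    exists_isOfFinOrder_mem_zpowers_and_mem_zpowers hx hy

theorem QuotientGroup.exponentExists_range_powMonoidHom {G : Type*} [CommGroup G] {n : ℕ}
    (hn : 0 < n) : Monoid.ExponentExists (G ⧸ (powMonoidHom n : G →* G).range) := by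
  refine ⟨n, hn, fun g => ?_⟩
  induction g using QuotientGroup.induction_on with
  | H x => rw [← QuotientGroup.mk_pow, QuotientGroup.eq_one_iff]; exact ⟨x, rfl⟩

/-- For a field `F`, let `t(F^*)` be the torsion subgroup of `F^*` (the roots of unity
in `F`). For any positive integer `n`, the quotient `t(F^*)/t(F^*)^n` by the subgroup
of `n`-th powers is a finite cyclic group. -/
theorem torsion_quotient_pow_cyclic_finite (F : Type) [Field F] (n : ℕ) (hn : 0 < n) :
    IsCyclic (↥(CommGroup.torsion Fˣ) ⧸
        (powMonoidHom n : ↥(CommGroup.torsion Fˣ) →* ↥(CommGroup.torsion Fˣ)).range) ∧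
      Finite (↥(CommGroup.torsion Fˣ) ⧸
        (powMonoidHom n : ↥(CommGroup.torsion Fˣ) →* ↥(CommGroup.torsion Fˣ)).range) := by
  have hQ := (isLocallyCyclic_torsion_units F).of_surjective _
    (QuotientGroup.mk'_surjective (powMonoidHom n).range)
  have hexp := QuotientGroup.exponentExists_range_powMonoidHom
    (G := CommGroup.torsion Fˣ) hn
  exact ⟨hQ.isCyclic hexp, hQ.finite hexp⟩
end

section
/- Let p be a prime, n a positive integer, and F a field of characteristic 0 containing a primitive p-th root of unity (with p odd), such that F does not contain a primitive p^{n-1}-th root of unity. Then the field F(ζ_{p^{n-1}}) obtained by adjoining a primitive p^{n-1}-th root of unity does not contain a primitive p^n-th root of unity. -/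
/-!
Suppose `ξ ∈ K = F(ζ)` is a primitive `p^n`-th root of unity. Since `ζ ∉ F`, some
`σ ∈ Gal(K/F)` moves `ζ`; on `p^n`-th roots of unity `σ` acts as `y ↦ y ^ b`. As `F` contains
the `p`-th roots of unity, `b ≡ 1 mod p`, while `b ≢ 1 mod p^(n-1)` because `σ ζ ≠ ζ`. Lifting
the exponent yields `k` with `b^k ≡ 1 mod p^(n-1)` but `b^k ≢ 1 mod p^n`: then `σ^k` fixes the
generator `ζ`, so it is the identity, and yet it moves `ξ`.
-/

theorem IsPrimitiveRoot.pow_eq_pow_iff_modEq {M : Type*} [CommMonoid M] {ζ : M} {k : ℕ}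
    [NeZero k] (h : IsPrimitiveRoot ζ k) {a c : ℕ} : ζ ^ a = ζ ^ c ↔ a ≡ c [MOD k] := by
  rw [h.eq_orderOf]
  exact (h.isOfFinOrder (NeZero.ne k)).pow_eq_pow_iff_modEq

theorem Nat.exists_pow_modEq_one_not_modEq_one {p b m : ℕ} (hp : p.Prime) (hpodd : Odd p)
    (hb : b ≡ 1 [MOD p]) (hbm : ¬ b ≡ 1 [MOD p ^ m]) :
    ∃ k, b ^ k ≡ 1 [MOD p ^ m] ∧ ¬ b ^ k ≡ 1 [MOD p ^ (m + 1)] := by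
  simp only [Nat.ModEq.comm (a := b ^ _), Nat.ModEq.comm (a := b), Nat.modEq_iff_dvd] at hb hbm ⊢
  push_cast at hb hbm ⊢
  have hp' : _root_.Prime (p : ℤ) := Nat.prime_iff_prime_int.mp hp
  have hpb : ¬ (p : ℤ) ∣ b := fun h => hp'.not_dvd_one (by simpa using _root_.dvd_sub h hb)
  rw [pow_dvd_iff_le_emultiplicity, not_le] at hbm
  obtain ⟨s, hs⟩ := ENat.ne_top_iff_exists.1 (ne_top_of_lt hbm)
  rw [← hs, Nat.cast_lt] at hbm
  -- lifting the exponent: `v_p(b ^ p ^ (m - s) - 1) = v_p(b - 1) + (m - s) = m`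
  have hval : emultiplicity (p : ℤ) ((b : ℤ) ^ p ^ (m - s) - 1 ^ p ^ (m - s)) = m := by
    rw [Int.emultiplicity_pow_sub_pow hp hpodd (by simpa using hb) hpb, ← hs,
      emultiplicity_pow_self_of_prime hp.prime, ← Nat.cast_add, Nat.add_sub_cancel' hbm.le]
  rw [one_pow] at hval
  refine ⟨p ^ (m - s), ?_, ?_⟩
  · rw [pow_dvd_iff_le_emultiplicity, hval]
  · rw [pow_dvd_iff_le_emultiplicity, hval, Nat.cast_le]
    omega

theorem IsPrimitiveRoot.isCyclotomicExtension_of_adjoin_eq_top {A B : Type*} [CommRing A]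
    [CommRing B] [Algebra A B] {ζ : B} {N : ℕ} [NeZero N] (hζ : IsPrimitiveRoot ζ N)
    (hgen : Algebra.adjoin A ({ζ} : Set B) = ⊤) : IsCyclotomicExtension {N} A B := by
  refine (IsCyclotomicExtension.iff_singleton N A B).2 ⟨⟨ζ, hζ⟩, fun x => ?_⟩
  have hx : x ∈ Algebra.adjoin A {ζ} := by rw [hgen]; exact Algebra.mem_top
  refine Algebra.adjoin_mono ?_ hx
  simpa using hζ.pow_eq_one

theorem IsPrimitiveRoot.exists_algEquiv_apply_ne {F K : Type*} [Field F] [Field K] [Algebra F K]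
    {ζ : K} {N : ℕ} [NeZero N] (hζ : IsPrimitiveRoot ζ N)
    (hgen : Algebra.adjoin F ({ζ} : Set K) = ⊤) (hF : ¬ ∃ z : F, IsPrimitiveRoot z N) :
    ∃ σ : K ≃ₐ[F] K, σ ζ ≠ ζ := by
  have := hζ.isCyclotomicExtension_of_adjoin_eq_top hgen
  have := IsCyclotomicExtension.finite_of_singleton N F K
  have := IsCyclotomicExtension.isGalois {N} F K
  by_contra! hfix
  obtain ⟨z, rfl⟩ := IntermediateField.mem_bot.1 ((IsGalois.mem_bot_iff_fixed ζ).2 hfix)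
  exact hF ⟨z, hζ.of_map_of_injective (algebraMap F K).injective⟩

theorem AlgEquiv.apply_eq_self_of_pow_eq_one {F K : Type*} [Field F] [CommRing K] [IsDomain K]
    [Algebra F K] {p : ℕ} [NeZero p] (hF : ∃ z : F, IsPrimitiveRoot z p) (σ : K ≃ₐ[F] K)
    {x : K} (hx : x ^ p = 1) : σ x = x := by
  obtain ⟨z, hz⟩ := hF
  obtain ⟨i, -, rfl⟩ := (hz.map_of_injective (algebraMap F K).injective).eq_pow_of_pow_eq_one hx
  rw [map_pow, AlgEquiv.commutes]

theorem IsPrimitiveRoot.exists_forall_apply_eq_pow {K G : Type*} [CommRing K] [IsDomain K]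
    [FunLike G K K] [MonoidHomClass G K K] {ξ : K} {N : ℕ} [NeZero N]
    (hξ : IsPrimitiveRoot ξ N) (σ : G) : ∃ b, ∀ y : K, y ^ N = 1 → σ y = y ^ b := by
  obtain ⟨b, -, hb⟩ :=
    hξ.eq_pow_of_pow_eq_one (ξ := σ ξ) (by rw [← map_pow, hξ.pow_eq_one, map_one])
  refine ⟨b, fun y hy => ?_⟩
  obtain ⟨c, -, rfl⟩ := hξ.eq_pow_of_pow_eq_one hy
  rw [map_pow, ← hb, ← pow_mul, ← pow_mul, mul_comm]

theorem AlgEquiv.pow_apply_eq_pow_pow {F K : Type*} [CommSemiring F] [CommSemiring K]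
    [Algebra F K] {σ : K ≃ₐ[F] K} {N b : ℕ} (hσ : ∀ y : K, y ^ N = 1 → σ y = y ^ b) (k : ℕ)
    {y : K} (hy : y ^ N = 1) : (σ ^ k) y = y ^ b ^ k := by
  induction k generalizing y with
  | zero => simp
  | succ k ih =>
    have hyb : (y ^ b) ^ N = 1 := by rw [← pow_mul, mul_comm, pow_mul, hy, one_pow]
    rw [pow_succ, AlgEquiv.mul_apply, hσ y hy, ih hyb, ← pow_mul, pow_succ']

theorem adjoin_primitive_root_p_pow_general (p n : ℕ) (hp : p.Prime) (hpodd : Odd p)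
    (F K : Type) [Field F] [Field K] [Algebra F K]
    (h1 : ∃ ζ : F, IsPrimitiveRoot ζ p)
    (h2 : ¬ ∃ ζ : F, IsPrimitiveRoot ζ (p ^ (n - 1)))
    (ζ : K) (hζ : IsPrimitiveRoot ζ (p ^ (n - 1)))
    (hgen : Algebra.adjoin F ({ζ} : Set K) = ⊤) :
    ¬ ∃ ξ : K, IsPrimitiveRoot ξ (p ^ n) := by
  rintro ⟨ξ, hξ⟩
  obtain _ | m := n
  · exact h2 ⟨1, by simp⟩
  rw [Nat.add_sub_cancel] at h2 hζ
  have : NeZero p := ⟨hp.ne_zero⟩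
  obtain ⟨σ, hσζ⟩ := hζ.exists_algEquiv_apply_ne hgen h2
  obtain ⟨b, hb⟩ := hξ.exists_forall_apply_eq_pow σ
  have hbp : b ≡ 1 [MOD p] := by
    have hη : IsPrimitiveRoot (ξ ^ p ^ m) p := hξ.pow (NeZero.pos _) (pow_succ p m)
    have hηN : (ξ ^ p ^ m) ^ p ^ (m + 1) = 1 := by rw [pow_right_comm, hξ.pow_eq_one, one_pow]
    rw [← hη.pow_eq_pow_iff_modEq, pow_one, ← hb _ hηN]
    exact σ.apply_eq_self_of_pow_eq_one h1 hη.pow_eq_one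
  have hζN : ζ ^ p ^ (m + 1) = 1 := by rw [pow_succ, pow_mul, hζ.pow_eq_one, one_pow]
  have hbm : ¬ b ≡ 1 [MOD p ^ m] := by
    rwa [← hζ.pow_eq_pow_iff_modEq, pow_one, ← hb ζ hζN]
  obtain ⟨k, hk, hk'⟩ := Nat.exists_pow_modEq_one_not_modEq_one hp hpodd hbp hbm
  have hσk : ((σ ^ k : K ≃ₐ[F] K) : K →ₐ[F] K) = AlgHom.id F K := by
    refine AlgHom.ext_of_adjoin_eq_top hgen ?_
    rw [Set.eqOn_singleton]
    change (σ ^ k) ζ = ζ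
    rw [AlgEquiv.pow_apply_eq_pow_pow hb k hζN, hζ.pow_eq_pow_iff_modEq.2 hk, pow_one]
  apply hk'
  rw [← hξ.pow_eq_pow_iff_modEq, pow_one, ← AlgEquiv.pow_apply_eq_pow_pow hb k hξ.pow_eq_one]
  exact DFunLike.congr_fun hσk ξ

/-- Let `p` be an odd prime, `n ≥ 1`, and `F` a field of characteristic `0` containing
a primitive `p`-th root of unity but no primitive `p^(n-1)`-th root of unity. If `K/F`
is the extension generated by a primitive `p^(n-1)`-th root of unity `ζ`
(i.e. `K = F(ζ_{p^(n-1)})`), then `K` contains no primitive `p^n`-th root of unity. -/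
theorem adjoin_primitive_root_p_pow (p n : ℕ) (hp : p.Prime) (hpodd : Odd p)
    (hn : 0 < n) (F K : Type) [Field F] [CharZero F] [Field K] [Algebra F K]
    (h1 : ∃ ζ : F, IsPrimitiveRoot ζ p)
    (h2 : ¬ ∃ ζ : F, IsPrimitiveRoot ζ (p ^ (n - 1)))
    (ζ : K) (hζ : IsPrimitiveRoot ζ (p ^ (n - 1)))
    (hgen : Algebra.adjoin F ({ζ} : Set K) = ⊤) :
    ¬ ∃ ξ : K, IsPrimitiveRoot ξ (p ^ n) :=
  adjoin_primitive_root_p_pow_general p n hp hpodd F K h1 h2 ζ hζ hgen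
end

section
/- Let A and B be finite groups. Then the Schur multiplier of the direct product satisfies M(A × B) ≅ M(A) × M(B) × (A/A' ⊗_ℤ B/B'), where ⊗_ℤ denotes the tensor product of the abelianizations. -/
/-- The group of 2-cocycles of `G` with values in the trivial `G`-module `M`. -/
def cocycleSet (G M : Type) [Group G] [CommGroup M] : Subgroup ((G × G) → M) where
  carrier := {α | ∀ g h k : G, α (g, h) * α (g * h, k) = α (g, h * k) * α (h, k)}
  one_mem' := by intro g h k; simp
  mul_mem' := by
    intro a c ha hc g h k
    simp only [Pi.mul_apply]
    rw [mul_mul_mul_comm, ha g h k, hc g h k, mul_mul_mul_comm]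
  inv_mem' := by
    intro a ha g h k
    simp only [Pi.inv_apply, ← mul_inv, ha g h k]

/-- The homomorphism sending `μ : G → M` to the 2-coboundary
`(g, h) ↦ μ(g) μ(h) μ(gh)⁻¹`. -/
def coboundaryHom (G M : Type) [Group G] [CommGroup M] : (G → M) →* ((G × G) → M) where
  toFun μ := fun p => μ p.1 * μ p.2 * (μ (p.1 * p.2))⁻¹
  map_one' := by funext p; simp
  map_mul' := by
    intro μ ν; funext p
    simp only [Pi.mul_apply, mul_inv]
    ac_rfl

/-- The second cohomology group `H²(G, M)` of `G` with coefficients in the trivial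
`G`-module `M`: 2-cocycles modulo 2-coboundaries. -/
abbrev H2 (G M : Type) [Group G] [CommGroup M] : Type :=
  ↥(cocycleSet G M) ⧸ ((coboundaryHom G M).range.subgroupOf (cocycleSet G M))

/-!
A 2-cocycle `α` on `A × B` is cohomologous to the product of the inflations of its restrictions
to `A` and to `B` with the cocycle `((x, y), (x', y')) ↦ c (x', y)`, where
`c a b = α ((1, b), (a, 1)) / α ((a, 1), (1, b))` is the commutator of lifts of `(a, 1)` and
`(1, b)` in the central extension defined by `α`. Because that third factor is again a cocycle,
`c` is bimultiplicative, and restriction together with `c` inverts the construction. Hence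
`H²(A × B, M) ≃ H²(A, M) × H²(B, M) × Bihom(A, B; M)` for every trivial coefficient group `M`.
Bimultiplicative maps `A × B → M` are the homomorphisms `A/A' ⊗ B/B' → M`, and for `M = ℂˣ` this
dual of the finite abelian group `A/A' ⊗ B/B'` is isomorphic to the group itself.
-/

variable {G H M : Type} [Group G] [Group H] [CommGroup M]

@[simp] lemma coboundaryHom_apply (μ : G → M) (p : G × G) :
    coboundaryHom G M μ p = μ p.1 * μ p.2 * (μ (p.1 * p.2))⁻¹ := rfl

namespace cocycleSet

lemma apply_one_left (α : cocycleSet G M) (g : G) : α.1 (1, g) = α.1 (1, 1) := by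
  simpa using (α.2 1 1 g).symm

lemma apply_one_right (α : cocycleSet G M) (g : G) : α.1 (g, 1) = α.1 (1, 1) := by
  simpa using α.2 g 1 1

lemma coboundary_mem (μ : G → M) : coboundaryHom G M μ ∈ cocycleSet G M := by
  intro g h k
  apply Additive.ofMul.injective
  simp only [coboundaryHom_apply, mul_assoc, ofMul_mul, ofMul_inv]
  abel

def comap (φ : G →* H) : cocycleSet H M →* cocycleSet G M where
  toFun α := ⟨fun p => α.1 (φ p.1, φ p.2), fun g h k => by simpa only [map_mul] using α.2 _ _ _⟩
  map_one' := rfl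
  map_mul' _ _ := rfl

@[simp] lemma comap_apply (φ : G →* H) (α : cocycleSet H M) (p : G × G) :
    (comap φ α).1 p = α.1 (φ p.1, φ p.2) := rfl

end cocycleSet

namespace H2

def comap (φ : G →* H) : H2 H M →* H2 G M :=
  QuotientGroup.map _ _ (cocycleSet.comap φ) fun _ ⟨μ, hμ⟩ =>
    ⟨μ ∘ φ, funext fun p => by simpa using congrFun hμ (φ p.1, φ p.2)⟩

@[simp] lemma comap_mk (φ : G →* H) (α : cocycleSet H M) :
    comap φ (α : H2 H M) = (cocycleSet.comap φ α : H2 G M) := rfl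

lemma comap_comp {K : Type} [Group K] (ψ : H →* K) (φ : G →* H) :
    comap (M := M) (ψ.comp φ) = (comap φ).comp (comap ψ) :=
  QuotientGroup.monoidHom_ext _ rfl

lemma comap_id : comap (M := M) (MonoidHom.id G) = MonoidHom.id (H2 G M) :=
  QuotientGroup.monoidHom_ext _ rfl

/-- A constant cocycle `c` is the coboundary of the constant cochain `c`. -/
lemma comap_one : comap (M := M) (1 : G →* H) = 1 := by
  refine QuotientGroup.monoidHom_ext _ (MonoidHom.ext fun α => ?_)
  refine (QuotientGroup.eq_one_iff _).2 ⟨fun _ => α.1 (1, 1), funext fun p => ?_⟩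
  simp

end H2

section Product

variable {A B : Type} [Group A] [Group B]

namespace cocycleSet

def ofPairing : (A →* B →* M) →* cocycleSet (A × B) M where
  toFun f := ⟨fun p => f p.2.1 p.1.2, fun g h k => by
    simp only [Prod.fst_mul, Prod.snd_mul, map_mul, MonoidHom.mul_apply, mul_assoc]⟩
  map_one' := rfl
  map_mul' _ _ := rfl

@[simp] lemma ofPairing_apply (f : A →* B →* M) (p : (A × B) × (A × B)) :
    (ofPairing f).1 p = f p.2.1 p.1.2 := rfl

def commutatorFun (α : cocycleSet (A × B) M) (a : A) (b : B) : M :=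
  α.1 ((1, b), (a, 1)) / α.1 ((a, 1), (1, b))

lemma apply_eq_mul_commutatorFun_mul_coboundary (α : cocycleSet (A × B) M)
    (x x' : A) (y y' : B) :
    α.1 ((x, y), (x', y')) = α.1 ((x, 1), (x', 1)) * α.1 ((1, y), (1, y')) *
      commutatorFun α x' y *
        coboundaryHom (A × B) M (fun q => (α.1 ((q.1, 1), (1, q.2)))⁻¹) ((x, y), (x', y')) := by
  have h₁ := congrArg Additive.ofMul (α.2 (x, 1) (x', 1) (1, y))
  have h₂ := congrArg Additive.ofMul (α.2 (x, 1) (1, y) (x', 1))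
  have h₃ := congrArg Additive.ofMul (α.2 (x * x', 1) (1, y) (1, y'))
  have h₄ := congrArg Additive.ofMul (α.2 (x, y) (x', 1) (1, y'))
  apply Additive.ofMul.injective
  simp only [commutatorFun, coboundaryHom_apply, Prod.mk_mul_mk, mul_one, one_mul, ofMul_mul,
    ofMul_div, ofMul_inv, inv_inv] at h₁ h₂ h₃ h₄ ⊢
  linear_combination (norm := abel) h₂ + h₃ - h₁ - h₄

lemma commutatorFun_mem (α : cocycleSet (A × B) M) :
    (fun p : (A × B) × (A × B) => commutatorFun α p.2.1 p.1.2) ∈ cocycleSet (A × B) M := by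
  set μ : A × B → M := fun q => (α.1 ((q.1, 1), (1, q.2)))⁻¹
  have hdecomp : (fun p : (A × B) × (A × B) => commutatorFun α p.2.1 p.1.2) =
      α.1 / (comap (MonoidHom.fst A B) (comap (MonoidHom.inl A B) α)).1 /
        (comap (MonoidHom.snd A B) (comap (MonoidHom.inr A B) α)).1 / coboundaryHom _ M μ := by
    funext ⟨⟨x, y⟩, ⟨x', y'⟩⟩
    rw [Pi.div_apply, Pi.div_apply, Pi.div_apply, apply_eq_mul_commutatorFun_mul_coboundary]
    simp only [comap_apply, MonoidHom.coe_fst, MonoidHom.inl_apply, MonoidHom.coe_snd,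
      MonoidHom.inr_apply]
    apply Additive.ofMul.injective
    simp only [ofMul_mul, ofMul_div]
    abel
  rw [hdecomp]
  exact div_mem (div_mem (div_mem α.2 (Subtype.prop _)) (Subtype.prop _)) (coboundary_mem μ)

lemma commutatorFun_one_left (α : cocycleSet (A × B) M) (b : B) : commutatorFun α 1 b = 1 := by
  rw [commutatorFun, Prod.mk_one_one, apply_one_right, apply_one_left α (1, b), div_self']

lemma commutatorFun_one_right (α : cocycleSet (A × B) M) (a : A) : commutatorFun α a 1 = 1 := by
  rw [commutatorFun, Prod.mk_one_one, apply_one_left, apply_one_right α (a, 1), div_self']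

lemma commutatorFun_mul_left (α : cocycleSet (A × B) M) (a a' : A) (b : B) :
    commutatorFun α (a * a') b = commutatorFun α a b * commutatorFun α a' b := by
  simpa [commutatorFun_one_right] using (commutatorFun_mem α (1, b) (a, 1) (a', 1)).symm

lemma commutatorFun_mul_right (α : cocycleSet (A × B) M) (a : A) (b b' : B) :
    commutatorFun α a (b * b') = commutatorFun α a b * commutatorFun α a b' := by
  simpa [commutatorFun_one_left] using commutatorFun_mem α (1, b) (1, b') (a, 1)

def commutatorPairing : cocycleSet (A × B) M →* (A →* B →* M) :=
  MonoidHom.mk'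
    (fun α => MonoidHom.mk'
      (fun a => MonoidHom.mk' (commutatorFun α a) (commutatorFun_mul_right α a))
      fun a a' => MonoidHom.ext (commutatorFun_mul_left α a a'))
    fun α β => by
      ext a b
      exact mul_div_mul_comm _ _ _ _

@[simp] lemma commutatorPairing_apply (α : cocycleSet (A × B) M) (a : A) (b : B) :
    commutatorPairing α a b = α.1 ((1, b), (a, 1)) / α.1 ((a, 1), (1, b)) := rfl

end cocycleSet

namespace H2

def commutatorPairing : H2 (A × B) M →* (A →* B →* M) :=
  QuotientGroup.lift _ cocycleSet.commutatorPairing fun α ⟨μ, hμ⟩ => by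
    have hα : ∀ p, α.1 p = coboundaryHom _ M μ p := fun p => (congrFun hμ p).symm
    ext a b
    simp [hα, mul_comm]

lemma comap_inl_comap_fst (a : H2 A M) :
    comap (MonoidHom.inl A B) (comap (MonoidHom.fst A B) a) = a := by
  rw [← MonoidHom.comp_apply, ← comap_comp, MonoidHom.fst_comp_inl, comap_id,
    MonoidHom.id_apply]

lemma comap_inr_comap_fst (a : H2 A M) :
    comap (MonoidHom.inr A B) (comap (MonoidHom.fst A B) a) = 1 := by
  rw [← MonoidHom.comp_apply, ← comap_comp, MonoidHom.fst_comp_inr, comap_one,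
    MonoidHom.one_apply]

lemma comap_inl_comap_snd (b : H2 B M) :
    comap (MonoidHom.inl A B) (comap (MonoidHom.snd A B) b) = 1 := by
  rw [← MonoidHom.comp_apply, ← comap_comp, MonoidHom.snd_comp_inl, comap_one,
    MonoidHom.one_apply]

lemma comap_inr_comap_snd (b : H2 B M) :
    comap (MonoidHom.inr A B) (comap (MonoidHom.snd A B) b) = b := by
  rw [← MonoidHom.comp_apply, ← comap_comp, MonoidHom.snd_comp_inr, comap_id,
    MonoidHom.id_apply]

lemma commutatorPairing_comap_fst (a : H2 A M) :
    commutatorPairing (comap (MonoidHom.fst A B) a) = 1 := by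
  induction a using QuotientGroup.induction_on with | H α => ?_
  ext x y
  simp [commutatorPairing, cocycleSet.apply_one_left, cocycleSet.apply_one_right]

lemma commutatorPairing_comap_snd (b : H2 B M) :
    commutatorPairing (comap (MonoidHom.snd A B) b) = 1 := by
  induction b using QuotientGroup.induction_on with | H β => ?_
  ext x y
  simp [commutatorPairing, cocycleSet.apply_one_left, cocycleSet.apply_one_right]

lemma comap_inl_ofPairing (f : A →* B →* M) :
    comap (MonoidHom.inl A B) (cocycleSet.ofPairing f : H2 (A × B) M) = 1 := by
  rw [comap_mk, ← QuotientGroup.mk_one]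
  congr 1
  ext p
  simp

lemma comap_inr_ofPairing (f : A →* B →* M) :
    comap (MonoidHom.inr A B) (cocycleSet.ofPairing f : H2 (A × B) M) = 1 := by
  rw [comap_mk, ← QuotientGroup.mk_one]
  congr 1
  ext p
  simp

lemma commutatorPairing_ofPairing (f : A →* B →* M) :
    commutatorPairing (cocycleSet.ofPairing f : H2 (A × B) M) = f := by
  ext a b
  simp [commutatorPairing]

def prodSplit : H2 (A × B) M →* H2 A M × H2 B M × (A →* B →* M) :=
  (comap (MonoidHom.inl A B)).prod ((comap (MonoidHom.inr A B)).prod commutatorPairing)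

def prodGlue : H2 A M × H2 B M × (A →* B →* M) →* H2 (A × B) M :=
  (comap (MonoidHom.fst A B)).coprod
    ((comap (MonoidHom.snd A B)).coprod ((QuotientGroup.mk' _).comp cocycleSet.ofPairing))

lemma prodSplit_prodGlue (x : H2 A M × H2 B M × (A →* B →* M)) :
    prodSplit (prodGlue x) = x := by
  obtain ⟨a, b, f⟩ := x
  simp only [prodSplit, prodGlue, MonoidHom.prod_apply, MonoidHom.coprod_apply, map_mul,
    MonoidHom.comp_apply, QuotientGroup.mk'_apply, comap_inl_comap_fst, comap_inr_comap_fst,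
    comap_inl_comap_snd, comap_inr_comap_snd, commutatorPairing_comap_fst,
    commutatorPairing_comap_snd, comap_inl_ofPairing, comap_inr_ofPairing,
    commutatorPairing_ofPairing, Prod.mk_mul_mk, mul_one, one_mul]

lemma prodGlue_prodSplit (c : H2 (A × B) M) : prodGlue (prodSplit c) = c := by
  induction c using QuotientGroup.induction_on with | H α => ?_
  simp only [prodSplit, prodGlue, MonoidHom.prod_apply, MonoidHom.coprod_apply, comap_mk,
    MonoidHom.comp_apply, QuotientGroup.mk'_apply, commutatorPairing, QuotientGroup.lift_mk]
  rw [← QuotientGroup.mk_mul, ← QuotientGroup.mk_mul, QuotientGroup.eq]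
  refine ⟨fun q => (α.1 ((q.1, 1), (1, q.2)))⁻¹, funext fun ⟨⟨x, y⟩, ⟨x', y'⟩⟩ => ?_⟩
  simp only [Subgroup.subtype_apply, Subgroup.coe_mul, Subgroup.coe_inv, Pi.mul_apply,
    Pi.inv_apply, cocycleSet.apply_eq_mul_commutatorFun_mul_coboundary α x x' y y']
  apply Additive.ofMul.injective
  simp [cocycleSet.commutatorFun]
  abel

def prodEquiv : H2 (A × B) M ≃* H2 A M × H2 B M × (A →* B →* M) :=
  prodSplit.toMulEquiv prodGlue (MonoidHom.ext prodGlue_prodSplit)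
    (MonoidHom.ext prodSplit_prodGlue)

end H2

end Product

section Tensor

open TensorProduct

variable (A B : Type) [Group A] [Group B]

abbrev abelianizationTensor : Type :=
  Additive (Abelianization A) ⊗[ℤ] Additive (Abelianization B)

variable {A B}

def pureTensor (a : A) (b : B) : Multiplicative (abelianizationTensor A B) :=
  .ofAdd (Additive.ofMul (Abelianization.of a) ⊗ₜ Additive.ofMul (Abelianization.of b))

lemma pureTensor_mul_left (a a' : A) (b : B) :
    pureTensor (a * a') b = pureTensor a b * pureTensor a' b := by
  simp only [pureTensor, map_mul, ofMul_mul, add_tmul, ofAdd_add]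

lemma pureTensor_mul_right (a : A) (b b' : B) :
    pureTensor a (b * b') = pureTensor a b * pureTensor a b' := by
  simp only [pureTensor, map_mul, ofMul_mul, tmul_add, ofAdd_add]

lemma abelianizationTensor.hom_ext {χ ψ : Multiplicative (abelianizationTensor A B) →* M}
    (h : ∀ a b, χ (pureTensor a b) = ψ (pureTensor a b)) : χ = ψ := by
  refine MonoidHom.ext fun t => ?_
  induction t using Multiplicative.rec with | ofAdd t => ?_
  induction t using TensorProduct.induction_on with
  | zero => simp only [ofAdd_zero, map_one]
  | tmul u v =>
    induction u using Additive.rec with | ofMul u => ?_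
    induction v using Additive.rec with | ofMul v => ?_
    induction u using QuotientGroup.induction_on with | H a => ?_
    induction v using QuotientGroup.induction_on with | H b => ?_
    exact h a b
  | add s t hs ht => simp only [ofAdd_add, map_mul, hs, ht]

def restrictPureTensor : (Multiplicative (abelianizationTensor A B) →* M) →* (A →* B →* M) :=
  MonoidHom.mk'
    (fun χ => MonoidHom.mk'
      (fun a => MonoidHom.mk' (fun b => χ (pureTensor a b)) fun b b' => by
        rw [pureTensor_mul_right, map_mul])
      fun a a' => by
        ext b
        simp only [MonoidHom.mk'_apply, MonoidHom.mul_apply, pureTensor_mul_left, map_mul])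
    fun _ _ => rfl

lemma restrictPureTensor_injective :
    Function.Injective (restrictPureTensor (A := A) (B := B) (M := M)) :=
  (injective_iff_map_eq_one _).2 fun _ hχ =>
    abelianizationTensor.hom_ext fun a b => DFunLike.congr_fun (DFunLike.congr_fun hχ a) b

def tensorLift (f : A →* B →* M) : Multiplicative (abelianizationTensor A B) →* M :=
  let F := (Abelianization.lift (Abelianization.lift f).flip).flip
  AddMonoidHom.toMultiplicativeLeft <| liftAddHom
    (AddMonoidHom.mk' (fun x => AddMonoidHom.mk' (fun y => Additive.ofMul (F x.toMul y.toMul))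
      fun y y' => by simp) fun x x' => by ext y; simp)
    fun r x y => by simp

lemma restrictPureTensor_tensorLift (f : A →* B →* M) :
    restrictPureTensor (tensorLift f) = f := by
  ext a b
  simp [restrictPureTensor, tensorLift, pureTensor]

end Tensor

noncomputable def pairingMulEquivTensorHom {A B : Type} [Group A] [Group B] :
    (A →* B →* M) ≃* (Multiplicative (abelianizationTensor A B) →* M) :=
  (MulEquiv.ofBijective restrictPureTensor
    ⟨restrictPureTensor_injective, fun f => ⟨tensorLift f, restrictPureTensor_tensorLift f⟩⟩).symm

open TensorProduct in
instance TensorProduct.finite {R M N : Type*} [CommSemiring R] [AddCommMonoid M]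
    [AddCommMonoid N] [Module R M] [Module R N] [Finite M] [Finite N] : Finite (M ⊗[R] N) := by
  classical
  have := Fintype.ofFinite M
  refine Finite.of_surjective (fun g : M → N => ∑ m, m ⊗ₜ[R] g m) fun t => ?_
  induction t using TensorProduct.induction_on with
  | zero => exact ⟨0, by simp⟩
  | tmul m n =>
    refine ⟨Pi.single m n, ?_⟩
    dsimp only
    rw [Finset.sum_eq_single m (fun x _ hx => by simp [hx]) (by simp), Pi.single_eq_same]
  | add s t hs ht =>
    obtain ⟨g, rfl⟩ := hs
    obtain ⟨g', rfl⟩ := ht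
    exact ⟨g + g', by simp [TensorProduct.tmul_add, Finset.sum_add_distrib]⟩

noncomputable def H2.prodEquivOfTensorDual {A B X : Type} [Group A] [Group B] [MulOneClass X]
    (e : (Multiplicative (abelianizationTensor A B) →* M) ≃* X) :
    H2 (A × B) M ≃* H2 A M × H2 B M × X :=
  H2.prodEquiv.trans <| (MulEquiv.refl _).prodCongr <| (MulEquiv.refl _).prodCongr <|
    pairingMulEquivTensorHom.trans e

/-- Schur's theorem on the multiplier of a direct product: for finite groups `A` and `B`,
`M(A × B) ≅ M(A) × M(B) × (A/A' ⊗_ℤ B/B')`, where `M(G) = H²(G, ℂ^*)` is the Schur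
multiplier and the last factor is the tensor product of the abelianizations. -/
theorem schur_multiplier_prod (A B : Type) [Group A] [Group B] [Fintype A] [Fintype B] :
    Nonempty (H2 (A × B) ℂˣ ≃*
      H2 A ℂˣ × H2 B ℂˣ ×
        Multiplicative
          (TensorProduct ℤ (Additive (Abelianization A)) (Additive (Abelianization B)))) := by
  have : NeZero (Monoid.exponent (Multiplicative (abelianizationTensor A B)) : ℂ) :=
    ⟨Nat.cast_ne_zero.2 Monoid.exponent_ne_zero_of_finite⟩
  obtain ⟨dual⟩ := CommGroup.monoidHom_mulEquiv_of_hasEnoughRootsOfUnity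
    (Multiplicative (abelianizationTensor A B)) ℂ
  exact ⟨H2.prodEquivOfTensorDual dual⟩
end
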